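/- arXiv:2007.04210 — 4 statements merged into one kernel-verified Lean document; each statement's English description precedes it below -/
import Mathlib

section
/- Let S be a finite set, and for each s ∈ S let β_s > 0, μ_s ≥ 0 with Σ_s Σ_d d·μ_{s,d} = λ_S ∈ (0,∞). Define f(x) = λ_R/λ + α_S · Σ_s Σ_d (d·μ_{s,d}/λ)·(x + (1-x)e^{-β_s})^{d-1}, where λ = λ_S + λ_I + λ_R with λ_I > 0 and α_S > 0. Then f has a unique fixed point x* in the open interval (0,1). -/
/-!
Writing `x + (1 - x) e^{-β_s}` as `lineMap (e^{-β_s}) 1 x`, `f` is a constant plus a nonnegative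
combination of powers of increasing affine self-maps of `[0, 1]`, hence convex and monotone on
`[0, 1]`; moreover `f 0 > 0` and `f 1 = (λ_R + α_S λ_S) / λ < 1`. Monotonicity locates a sign
change of `f x - x` inside `(0, 1)`, where convexity gives continuity. A convex function with two
fixed points `u < v < 1` has slope at least `1` on `[v, 1]`, contradicting `f 1 < 1`.
-/

open Set AffineMap

section FixedPoint

variable {f : ℝ → ℝ} {a b : ℝ}

theorem MonotoneOn.exists_mem_Ioo_eq_self (hab : a ≤ b) (hmono : MonotoneOn f (Icc a b))
    (hcont : ContinuousOn f (Ioo a b)) (ha : a < f a) (hb : f b < b) :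
    ∃ x ∈ Ioo a b, f x = x := by
  have hfab : f a ≤ f b := hmono (left_mem_Icc.2 hab) (right_mem_Icc.2 hab) hab
  set p := (a + f a) / 2 with hp
  set q := (f b + b) / 2 with hq
  have hpq : p ≤ q := by linarith
  have hsub : Icc p q ⊆ Ioo a b := Icc_subset_Ioo (by linarith) (by linarith)
  have hgp : 0 ≤ f p - p := by
    have := hmono (left_mem_Icc.2 hab) (Ioo_subset_Icc_self (hsub (left_mem_Icc.2 hpq)))
      (by linarith)
    linarith
  have hgq : f q - q ≤ 0 := by
    have := hmono (Ioo_subset_Icc_self (hsub (right_mem_Icc.2 hpq))) (right_mem_Icc.2 hab)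
      (by linarith)
    linarith
  obtain ⟨x, hx, hgx⟩ := intermediate_value_Icc' hpq
    ((hcont.mono hsub).sub continuousOn_id) ⟨hgq, hgp⟩
  exact ⟨x, hsub hx, sub_eq_zero.1 hgx⟩

theorem ConvexOn.apply_ne_self_of_lt (hconv : ConvexOn ℝ (Icc a b) f) (hb : f b < b) {u v : ℝ}
    (hau : a ≤ u) (huv : u < v) (hvb : v < b) (hfu : f u = u) : f v ≠ v := by
  intro hfv
  have hslope := hconv.slope_mono_adjacent ⟨hau, (huv.trans hvb).le⟩
    ⟨(hau.trans huv.le).trans hvb.le, le_rfl⟩ huv hvb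
  rw [hfu, hfv, div_self (sub_pos.2 huv).ne', le_div_iff₀ (sub_pos.2 hvb)] at hslope
  linarith

theorem ConvexOn.existsUnique_mem_Ioo_eq_self (hab : a ≤ b) (hconv : ConvexOn ℝ (Icc a b) f)
    (hmono : MonotoneOn f (Icc a b)) (ha : a < f a) (hb : f b < b) :
    ∃! x, x ∈ Ioo a b ∧ f x = x := by
  have hcont : ContinuousOn f (Ioo a b) := by
    simpa only [interior_Icc] using hconv.continuousOn_interior
  obtain ⟨x, hx, hfx⟩ := hmono.exists_mem_Ioo_eq_self hab hcont ha hb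
  refine ⟨x, ⟨hx, hfx⟩, fun y ⟨hy, hfy⟩ => ?_⟩
  by_contra hne
  rcases lt_or_gt_of_ne hne with hyx | hxy
  · exact hconv.apply_ne_self_of_lt hb hy.1.le hyx hx.2 hfy hfx
  · exact hconv.apply_ne_self_of_lt hb hx.1.le hxy hy.2 hfx hfy

end FixedPoint

section Sums

variable {ι E : Type*} {s : Set E} {F : ι → E → ℝ}

theorem convexOn_tsum [AddCommMonoid E] [Module ℝ E] (hs : Convex ℝ s)
    (hF : ∀ i, ConvexOn ℝ s (F i)) (hsum : ∀ x ∈ s, Summable fun i => F i x) :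
    ConvexOn ℝ s fun x => ∑' i, F i x := by
  refine ⟨hs, fun x hx y hy a b ha hb hab => ?_⟩
  calc ∑' i, F i (a • x + b • y)
      ≤ ∑' i, (a • F i x + b • F i y) :=
        Summable.tsum_le_tsum (fun i => (hF i).2 hx hy ha hb hab) (hsum _ (hs hx hy ha hb hab))
          (((hsum x hx).const_smul a).add ((hsum y hy).const_smul b))
    _ = a • ∑' i, F i x + b • ∑' i, F i y := by
        rw [Summable.tsum_add ((hsum x hx).const_smul a) ((hsum y hy).const_smul b),
          (hsum x hx).tsum_const_smul, (hsum y hy).tsum_const_smul]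

theorem monotoneOn_tsum [Preorder E] (hF : ∀ i, MonotoneOn (F i) s)
    (hsum : ∀ x ∈ s, Summable fun i => F i x) :
    MonotoneOn (fun x => ∑' i, F i x) s := fun x hx y hy hxy =>
  Summable.tsum_le_tsum (fun i => hF i hx hy hxy) (hsum x hx) (hsum y hy)

theorem convexOn_fintype_sum [Fintype ι] [AddCommMonoid E] [Module ℝ E] (hs : Convex ℝ s)
    (hF : ∀ i, ConvexOn ℝ s (F i)) : ConvexOn ℝ s fun x => ∑ i, F i x := by
  simpa only [tsum_fintype] using convexOn_tsum hs hF fun _ _ => Summable.of_finite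

theorem monotoneOn_fintype_sum [Fintype ι] [Preorder E] (hF : ∀ i, MonotoneOn (F i) s) :
    MonotoneOn (fun x => ∑ i, F i x) s := by
  simpa only [tsum_fintype] using monotoneOn_tsum hF fun _ _ => Summable.of_finite

end Sums

section AffinePowers

variable {c : ℝ}

theorem lineMap_one_mem_Icc (hc : c ∈ Icc (0 : ℝ) 1) {x : ℝ} (hx : x ∈ Icc (0 : ℝ) 1) :
    lineMap c 1 x ∈ Icc (0 : ℝ) 1 :=
  (convex_Icc 0 1).lineMap_mem hc (right_mem_Icc.2 zero_le_one) hx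

theorem convexOn_mul_lineMap_pow (hc : c ∈ Icc (0 : ℝ) 1) {w : ℝ} (hw : 0 ≤ w) (n : ℕ) :
    ConvexOn ℝ (Icc 0 1) fun x : ℝ => w * lineMap c 1 x ^ n :=
  (((convexOn_pow n).comp_affineMap (lineMap c 1)).subset
    (fun _ hx => (lineMap_one_mem_Icc hc hx).1) (convex_Icc 0 1)).smul hw

theorem monotoneOn_mul_lineMap_pow (hc : c ∈ Icc (0 : ℝ) 1) {w : ℝ} (hw : 0 ≤ w) (n : ℕ) :
    MonotoneOn (fun x : ℝ => w * lineMap c 1 x ^ n) (Icc 0 1) := fun _ hx _ _ hxy =>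
  mul_le_mul_of_nonneg_left
    (pow_le_pow_left₀ (lineMap_one_mem_Icc hc hx).1 (lineMap_mono hc.2 hxy) n) hw

theorem summable_mul_pow_of_mem_Icc {w : ℕ → ℝ} (hw0 : ∀ d, 0 ≤ w d) (hw : Summable w)
    (k : ℕ → ℕ) {z : ℝ} (hz : z ∈ Icc (0 : ℝ) 1) : Summable fun d => w d * z ^ k d :=
  hw.of_nonneg_of_le (fun d => mul_nonneg (hw0 d) (pow_nonneg hz.1 _))
    fun d => mul_le_of_le_one_right (hw0 d) (pow_le_one₀ hz.1 hz.2)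

end AffinePowers

section Mixture

variable {S : Type*} [Fintype S] {c : S → ℝ} {w : S → ℕ → ℝ}

theorem convexOn_sum_tsum_mul_lineMap_pow (hc : ∀ s, c s ∈ Icc (0 : ℝ) 1)
    (hw0 : ∀ s d, 0 ≤ w s d) (hw : ∀ s, Summable (w s)) (k : ℕ → ℕ) :
    ConvexOn ℝ (Icc 0 1) fun x : ℝ => ∑ s, ∑' d, w s d * lineMap (c s) 1 x ^ k d :=
  convexOn_fintype_sum (convex_Icc 0 1) fun s =>
    convexOn_tsum (convex_Icc 0 1) (fun d => convexOn_mul_lineMap_pow (hc s) (hw0 s d) (k d))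
      fun _ hx => summable_mul_pow_of_mem_Icc (hw0 s) (hw s) k (lineMap_one_mem_Icc (hc s) hx)

theorem monotoneOn_sum_tsum_mul_lineMap_pow (hc : ∀ s, c s ∈ Icc (0 : ℝ) 1)
    (hw0 : ∀ s d, 0 ≤ w s d) (hw : ∀ s, Summable (w s)) (k : ℕ → ℕ) :
    MonotoneOn (fun x : ℝ => ∑ s, ∑' d, w s d * lineMap (c s) 1 x ^ k d) (Icc 0 1) :=
  monotoneOn_fintype_sum fun s =>
    monotoneOn_tsum (fun d => monotoneOn_mul_lineMap_pow (hc s) (hw0 s d) (k d))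
      fun _ hx => summable_mul_pow_of_mem_Icc (hw0 s) (hw s) k (lineMap_one_mem_Icc (hc s) hx)

end Mixture

theorem stmt_0_general {S : Type*} [Fintype S]
    (β : S → ℝ) (μ : S → ℕ → ℝ)
    (lamS lamI lamR alphaS : ℝ)
    (hβ : ∀ s, 0 < β s)
    (hμ : ∀ s d, 0 ≤ μ s d)
    (hlamS : 0 < lamS) (hlamI : 0 < lamI) (hlamR : 0 < lamR)
    (hαS : alphaS ∈ Set.Ioc (0:ℝ) 1)
    (hsummable : ∀ s, Summable fun d : ℕ => (d : ℝ) * μ s d)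
    (hsum : ∑ s, ∑' d : ℕ, (d : ℝ) * μ s d = lamS)
    (lam : ℝ) (hlam : lam = lamS + lamI + lamR)
    (f : ℝ → ℝ)
    (hf : ∀ x, f x = lamR / lam +
      alphaS * ∑ s, ∑' d : ℕ, ((d : ℝ) * μ s d / lam) *
        (x + (1 - x) * Real.exp (-β s)) ^ (d - 1)) :
    ∃! x, x ∈ Set.Ioo (0:ℝ) 1 ∧ f x = x := by
  obtain ⟨hα0, hα1⟩ := hαS
  have hlam_pos : 0 < lam := by linarith
  set c : S → ℝ := fun s => Real.exp (-β s)
  have hc : ∀ s, c s ∈ Icc (0 : ℝ) 1 := fun s =>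
    ⟨(Real.exp_pos _).le, Real.exp_le_one_iff.2 (neg_nonpos.2 (hβ s).le)⟩
  set w : S → ℕ → ℝ := fun s d => (d : ℝ) * μ s d / lam
  have hw0 : ∀ s d, 0 ≤ w s d := fun s d => by have := hμ s d; positivity
  have hw : ∀ s, Summable (w s) := fun s => (hsummable s).div_const lam
  set G : ℝ → ℝ := fun x => ∑ s, ∑' d, w s d * lineMap (c s) 1 x ^ (d - 1)
  have hfG : f = fun x => lamR / lam + alphaS * G x := by
    ext x
    simp only [hf, G, w, c, lineMap_apply_ring']
    ring_nf
  have hG_conv := convexOn_sum_tsum_mul_lineMap_pow hc hw0 hw (· - 1)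
  have hG_mono := monotoneOn_sum_tsum_mul_lineMap_pow hc hw0 hw (· - 1)
  have hG0 : 0 ≤ G 0 := Finset.sum_nonneg fun s _ => tsum_nonneg fun d => mul_nonneg (hw0 s d)
    (pow_nonneg (lineMap_one_mem_Icc (hc s) (left_mem_Icc.2 zero_le_one)).1 _)
  have hG1 : G 1 = lamS / lam := by
    simp only [G, w, lineMap_apply_one, one_pow, mul_one, tsum_div_const, ← Finset.sum_div, hsum]
  subst hfG
  refine ConvexOn.existsUnique_mem_Ioo_eq_self zero_le_one
    ((convexOn_const _ (convex_Icc 0 1)).add (hG_conv.smul hα0.le))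
    (fun x hx y hy hxy => add_le_add_right (mul_le_mul_of_nonneg_left (hG_mono hx hy hxy) hα0.le) _)
    (by positivity) ?_
  rw [hG1, mul_div_assoc', ← add_div, div_lt_one hlam_pos]
  linarith [mul_le_of_le_one_left hlamS.le hα1]

theorem stmt_0 {S : Type*} [Fintype S]
    (β : S → ℝ) (μ : S → ℕ → ℝ)
    (lamS lamI lamR alphaS : ℝ)
    (hβ : ∀ s, 0 < β s)
    (hμ : ∀ s d, 0 ≤ μ s d) (hμ1 : ∀ s d, μ s d ≤ 1)
    (hlamS : 0 < lamS) (hlamI : 0 < lamI) (hlamR : 0 < lamR)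
    (hαS : alphaS ∈ Set.Ioc (0:ℝ) 1)
    (hsummable : ∀ s, Summable fun d : ℕ => (d : ℝ) * μ s d)
    (hsum : ∑ s, ∑' d : ℕ, (d : ℝ) * μ s d = lamS)
    (lam : ℝ) (hlam : lam = lamS + lamI + lamR)
    (f : ℝ → ℝ)
    (hf : ∀ x, f x = lamR / lam +
      alphaS * ∑ s, ∑' d : ℕ, ((d : ℝ) * μ s d / lam) *
        (x + (1 - x) * Real.exp (-β s)) ^ (d - 1)) :
    ∃! x, x ∈ Set.Ioo (0:ℝ) 1 ∧ f x = x :=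
  stmt_0_general β μ lamS lamI lamR alphaS hβ hμ hlamS hlamI hlamR hαS hsummable hsum lam hlam f hf
end

section
/- Suppose λ_I = 0 (so λ = λ_R + λ_S) and define f(x) = λ_R/λ + α_S·Σ_s Σ_d (d·μ_{s,d}/λ)(x + (1-x)e^{-β_s})^{d-1} and R_0 = (α_S/λ)·Σ_s (1 - e^{-β_s})·Σ_d d(d-1)·μ_{s,d}. If R_0 < 1, then f(x) > x for all x ∈ [0,1), and f(1) = 1. -/
/-! The map `y ↦ y ^ (d - 1)` is convex, so on `[0, 1]` it lies above its tangent line at `1`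
(Bernoulli's inequality). Writing `y_s = x + (1 - x) e^{-β_s}`, so that `1 - y_s = (1 - x)(1 - e^{-β_s})`,
this bounds `f x` from below by `1 - (1 - x) R₀`, which exceeds `x` when `R₀ < 1` and `x < 1`. -/

lemma one_sub_mul_one_sub_le_pow {y : ℝ} (hy : -1 ≤ y) (n : ℕ) :
    1 - n * (1 - y) ≤ y ^ n := by
  have := one_add_mul_le_pow (a := y - 1) (by linarith) n
  rw [add_sub_cancel] at this
  linear_combination this

lemma natCast_sub_mul_le_mul_pow_pred {y : ℝ} (hy : -1 ≤ y) (d : ℕ) :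
    (d : ℝ) - (1 - y) * ((d : ℝ) * ((d : ℝ) - 1)) ≤ d * y ^ (d - 1) := by
  rcases d with _ | n
  · simp
  · calc ((n + 1 : ℕ) : ℝ) - (1 - y) * (((n + 1 : ℕ) : ℝ) * (((n + 1 : ℕ) : ℝ) - 1))
        = ((n + 1 : ℕ) : ℝ) * (1 - n * (1 - y)) := by push_cast; ring
      _ ≤ ((n + 1 : ℕ) : ℝ) * y ^ (n + 1 - 1) := by
        rw [Nat.add_sub_cancel]
        exact mul_le_mul_of_nonneg_left (one_sub_mul_one_sub_le_pow hy n) (Nat.cast_nonneg _)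

lemma tsum_sub_mul_tsum_le_tsum_mul_pow_pred {a : ℕ → ℝ} (ha : ∀ d, 0 ≤ a d)
    (h₁ : Summable fun d : ℕ => (d : ℝ) * a d)
    (h₂ : Summable fun d : ℕ => (d : ℝ) * ((d : ℝ) - 1) * a d)
    {y : ℝ} (hy₀ : 0 ≤ y) (hy₁ : y ≤ 1) :
    ∑' d : ℕ, (d : ℝ) * a d - (1 - y) * ∑' d : ℕ, (d : ℝ) * ((d : ℝ) - 1) * a d
      ≤ ∑' d : ℕ, (d : ℝ) * a d * y ^ (d - 1) := by
  have hle : ∀ d : ℕ, (d : ℝ) * a d * y ^ (d - 1) ≤ (d : ℝ) * a d := fun d =>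
    mul_le_of_le_one_right (mul_nonneg d.cast_nonneg (ha d)) (pow_le_one₀ hy₀ hy₁)
  have hsummable : Summable fun d : ℕ => (d : ℝ) * a d * y ^ (d - 1) :=
    h₁.of_nonneg_of_le (fun d => by have := ha d; positivity) hle
  rw [← tsum_mul_left, ← h₁.tsum_sub (h₂.mul_left _)]
  refine (h₁.sub (h₂.mul_left _)).tsum_le_tsum (fun d => ?_) hsummable
  have := mul_le_mul_of_nonneg_right (natCast_sub_mul_le_mul_pow_pred (by linarith) d) (ha d)
  linarith

lemma tsum_sub_mul_tsum_le_tsum_mul_add_mul_pow_pred {a : ℕ → ℝ} (ha : ∀ d, 0 ≤ a d)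
    (h₁ : Summable fun d : ℕ => (d : ℝ) * a d)
    (h₂ : Summable fun d : ℕ => (d : ℝ) * ((d : ℝ) - 1) * a d)
    {x c : ℝ} (hx₀ : 0 ≤ x) (hx₁ : x ≤ 1) (hc₀ : 0 ≤ c) (hc₁ : c ≤ 1) :
    ∑' d : ℕ, (d : ℝ) * a d - (1 - x) * ((1 - c) * ∑' d : ℕ, (d : ℝ) * ((d : ℝ) - 1) * a d)
      ≤ ∑' d : ℕ, (d : ℝ) * a d * (x + (1 - x) * c) ^ (d - 1) := by
  have := tsum_sub_mul_tsum_le_tsum_mul_pow_pred ha h₁ h₂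
    (y := x + (1 - x) * c) (by nlinarith) (by nlinarith)
  rwa [show 1 - (x + (1 - x) * c) = (1 - x) * (1 - c) by ring, mul_assoc] at this

theorem stmt_4 {S : Type*} [Fintype S]
    (β : S → ℝ) (μ : S → ℕ → ℝ) (lamS lamR alphaS : ℝ)
    (hβ : ∀ s, 0 < β s) (hμ : ∀ s d, 0 ≤ μ s d)
    (hlamS : 0 < lamS) (hlamR : 0 ≤ lamR)
    (hαS : alphaS ∈ Set.Ioc (0:ℝ) 1)
    (hsummable : ∀ s, Summable fun d : ℕ => (d:ℝ) * μ s d)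
    (hsummable2 : ∀ s, Summable fun d : ℕ => (d:ℝ) * ((d:ℝ) - 1) * μ s d)
    (hsum : alphaS * ∑ s, ∑' d : ℕ, (d:ℝ) * μ s d = lamS)
    (lam : ℝ) (hlam : lam = lamR + lamS)
    (f : ℝ → ℝ)
    (hf : ∀ x, f x = lamR / lam + alphaS * ∑ s, ∑' d : ℕ,
      ((d:ℝ) * μ s d / lam) * (x + (1-x) * Real.exp (-β s)) ^ (d-1))
    (R0 : ℝ)
    (hR0 : R0 = (alphaS / lam) * ∑ s, (1 - Real.exp (-β s)) *
      ∑' d : ℕ, (d:ℝ) * ((d:ℝ) - 1) * μ s d)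
    (hR0lt : R0 < 1) :
    (∀ x ∈ Set.Ico (0:ℝ) 1, x < f x) ∧ f 1 = 1 := by
  have hlam₀ : 0 < lam := by linarith
  have hf' : ∀ x, lam * f x = lamR + alphaS * ∑ s, ∑' d : ℕ,
      (d : ℝ) * μ s d * (x + (1 - x) * Real.exp (-β s)) ^ (d - 1) := fun x => by
    simp_rw [hf x, div_mul_eq_mul_div, tsum_div_const, ← Finset.sum_div]
    field_simp
  refine ⟨fun x ⟨hx₀, hx₁⟩ => ?_, ?_⟩
  · have hlower := fun s => tsum_sub_mul_tsum_le_tsum_mul_add_mul_pow_pred (hμ s)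
      (hsummable s) (hsummable2 s) hx₀ hx₁.le (Real.exp_pos (-β s)).le
      (Real.exp_le_one_iff.mpr (neg_nonpos.mpr (hβ s).le))
    have hlamR0 : lam * R0 = alphaS * ∑ s, (1 - Real.exp (-β s)) *
        ∑' d : ℕ, (d : ℝ) * ((d : ℝ) - 1) * μ s d := by
      rw [hR0]; field_simp
    have hbound : lamS - (1 - x) * (lam * R0) ≤ lam * f x - lamR := by
      rw [hf', hlamR0, ← hsum, add_sub_cancel_left, mul_left_comm, ← mul_sub, Finset.mul_sum,
        ← Finset.sum_sub_distrib]
      exact mul_le_mul_of_nonneg_left (Finset.sum_le_sum fun s _ => hlower s) hαS.1.le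
    have hR0x := mul_lt_mul_of_pos_left hR0lt (mul_pos (sub_pos.2 hx₁) hlam₀)
    have : lam * x < lam * f x := by linarith
    exact lt_of_mul_lt_mul_left this hlam₀.le
  · have h1 := hf' 1
    simp only [sub_self, zero_mul, add_zero, one_pow, mul_one, hsum] at h1
    exact (mul_eq_left₀ hlam₀.ne').mp (by linarith)
end

section
/- With x = √(1 - 2τ/λ), one has s_{d,θ,ℓ}(τ) = x^{d-ℓ}·Σ_{r=0}^{ℓ} s_{d,θ,r}(0)·C(d-r, ℓ-r)·(1-x)^{ℓ-r}, where the functions s_{d,θ,ℓ} satisfy the recursive linear ODE system s_{d,θ,ℓ}'(u) = (d-ℓ+1)s_{d,θ,ℓ-1}(u) - (d-ℓ)s_{d,θ,ℓ}(u) and s_{d,θ,0}'(u) = -d·s_{d,θ,0}(u) in the time variable u = -½ln(λ-2τ). -/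
/-!
Put `x = exp (u₀ - u)` with `u₀ = -½ log λ`, so that `x' = -x`, `x = 1` at `u₀`, and
`x = √(1 - 2τ/λ)` at `u = -½ log (λ - 2τ)`. Each term `C(d-r, ℓ-r) x^(d-ℓ) (1-x)^(ℓ-r)`
satisfies the triangular system on its own, the `(d - ℓ + 1)`-coupling coming from
`(ℓ-r) C(d-r, ℓ-r) = (d-ℓ+1) C(d-r, ℓ-1-r)`, and the combination with coefficients `s_r(u₀)`
takes the value `s_ℓ(u₀)` at `x = 1`. Induction on `ℓ` and uniqueness for the scalar linear
equation `y' = c y + b(u)` finish the proof.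
-/

open Finset Real

noncomputable def thresholdSol (d : ℕ) (a : ℕ → ℝ) (ℓ : ℕ) (x : ℝ) : ℝ :=
  x ^ (d - ℓ) * ∑ r ∈ range (ℓ + 1), a r * ((d - r).choose (ℓ - r) : ℝ) * (1 - x) ^ (ℓ - r)

noncomputable def thresholdTerm (d ℓ r : ℕ) (x : ℝ) : ℝ :=
  ((d - r).choose (ℓ - r) : ℝ) * x ^ (d - ℓ) * (1 - x) ^ (ℓ - r)

lemma thresholdSol_eq_sum_thresholdTerm (d : ℕ) (a : ℕ → ℝ) (ℓ : ℕ) (x : ℝ) :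
    thresholdSol d a ℓ x = ∑ r ∈ range (ℓ + 1), a r * thresholdTerm d ℓ r x := by
  rw [thresholdSol, mul_sum]
  exact sum_congr rfl fun r _ => by rw [thresholdTerm]; ring

lemma thresholdSol_one (d : ℕ) (a : ℕ → ℝ) (ℓ : ℕ) : thresholdSol d a ℓ 1 = a ℓ := by
  rw [thresholdSol, sum_eq_single_of_mem ℓ (self_mem_range_succ ℓ)]
  · simp
  · intro r hr hrℓ
    have : 0 < ℓ - r := by have := mem_range.mp hr; omega
    simp [zero_pow this.ne']

section Derivatives

variable {x : ℝ → ℝ} {u : ℝ}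

lemma hasDerivAt_pow_of_hasDerivAt_neg_self (hx : HasDerivAt x (-x u) u) (n : ℕ) :
    HasDerivAt (fun w => x w ^ n) (-n * x u ^ n) u := by
  refine (hx.fun_pow n).congr_deriv ?_
  cases n with
  | zero => simp
  | succ k => simp only [Nat.add_sub_cancel, pow_succ]; push_cast; ring

lemma hasDerivAt_thresholdTerm (hx : HasDerivAt x (-x u) u) {d ℓ : ℕ} (hℓ : ℓ ≤ d) (r : ℕ) :
    HasDerivAt (fun w => thresholdTerm d ℓ r (x w))
      (((ℓ - r : ℕ) : ℝ) * (d - r).choose (ℓ - r) * x u ^ (d - ℓ + 1) * (1 - x u) ^ (ℓ - r - 1)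
        - ((d : ℝ) - ℓ) * thresholdTerm d ℓ r (x u)) u := by
  have h := ((hasDerivAt_pow_of_hasDerivAt_neg_self hx (d - ℓ)).mul
    ((hx.const_sub 1).fun_pow (ℓ - r))).const_mul ((d - r).choose (ℓ - r) : ℝ)
  unfold thresholdTerm
  refine (h.congr_deriv ?_).congr_of_eventuallyEq (.of_forall fun w => mul_assoc _ _ _)
  rw [Nat.cast_sub hℓ]
  ring

lemma hasDerivAt_thresholdTerm_self (hx : HasDerivAt x (-x u) u) {d ℓ : ℕ} (hℓ : ℓ ≤ d) :
    HasDerivAt (fun w => thresholdTerm d ℓ ℓ (x w))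
      (-((d : ℝ) - ℓ) * thresholdTerm d ℓ ℓ (x u)) u :=
  (hasDerivAt_thresholdTerm hx hℓ ℓ).congr_deriv (by simp; ring)

lemma hasDerivAt_thresholdTerm_succ (hx : HasDerivAt x (-x u) u) {d m r : ℕ} (hm : m + 1 ≤ d)
    (hr : r ≤ m) :
    HasDerivAt (fun w => thresholdTerm d (m + 1) r (x w))
      (((d : ℝ) - m) * thresholdTerm d m r (x u)
        - ((d : ℝ) - (m + 1)) * thresholdTerm d (m + 1) r (x u)) u := by
  refine (hasDerivAt_thresholdTerm hx hm r).congr_deriv ?_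
  have hchoose : ((m + 1 - r : ℕ) : ℝ) * (d - r).choose (m + 1 - r)
      = ((d : ℝ) - m) * (d - r).choose (m - r) := by
    have h := Nat.choose_succ_right_eq (d - r) (m - r)
    rw [show m - r + 1 = m + 1 - r by omega, show d - r - (m - r) = d - m by omega] at h
    rw [← Nat.cast_sub (by omega : m ≤ d)]
    exact_mod_cast (mul_comm _ _).trans (h.trans (mul_comm _ _))
  rw [hchoose, show d - (m + 1) + 1 = d - m by omega, show m + 1 - r - 1 = m - r by omega]
  unfold thresholdTerm
  push_cast
  ring

variable (d : ℕ) (a : ℕ → ℝ)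

lemma hasDerivAt_thresholdSol_zero (hx : HasDerivAt x (-x u) u) :
    HasDerivAt (fun w => thresholdSol d a 0 (x w)) (-(d : ℝ) * thresholdSol d a 0 (x u)) u := by
  simp only [thresholdSol_eq_sum_thresholdTerm, zero_add, sum_range_one]
  refine ((hasDerivAt_thresholdTerm_self hx (Nat.zero_le d)).const_mul (a 0)).congr_deriv ?_
  push_cast
  ring

lemma hasDerivAt_thresholdSol_succ (hx : HasDerivAt x (-x u) u) {m : ℕ} (hm : m + 1 ≤ d) :
    HasDerivAt (fun w => thresholdSol d a (m + 1) (x w))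
      (((d : ℝ) - m) * thresholdSol d a m (x u)
        - ((d : ℝ) - (m + 1)) * thresholdSol d a (m + 1) (x u)) u := by
  simp only [thresholdSol_eq_sum_thresholdTerm, sum_range_succ _ (m + 1)]
  have hlow := HasDerivAt.fun_sum (u := range (m + 1)) fun r hr =>
    (hasDerivAt_thresholdTerm_succ hx hm (Nat.lt_succ_iff.mp (mem_range.mp hr))).const_mul (a r)
  refine (hlow.add ((hasDerivAt_thresholdTerm_self hx hm).const_mul (a (m + 1)))).congr_deriv ?_
  have hsplit : ∑ r ∈ range (m + 1), a r * (((d : ℝ) - m) * thresholdTerm d m r (x u)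
        - ((d : ℝ) - (m + 1)) * thresholdTerm d (m + 1) r (x u))
      = ((d : ℝ) - m) * ∑ r ∈ range (m + 1), a r * thresholdTerm d m r (x u)
        - ((d : ℝ) - (m + 1)) * ∑ r ∈ range (m + 1), a r * thresholdTerm d (m + 1) r (x u) := by
    rw [mul_sum, mul_sum, ← sum_sub_distrib]
    exact sum_congr rfl fun r _ => by ring
  rw [hsplit]
  push_cast
  ring

end Derivatives

lemma eq_of_hasDerivAt_linear {f g b : ℝ → ℝ} {c u₀ : ℝ}
    (hf : ∀ u, HasDerivAt f (c * f u + b u) u) (hg : ∀ u, HasDerivAt g (c * g u + b u) u)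
    (h₀ : f u₀ = g u₀) : f = g :=
  ODE_solution_unique_univ (v := fun u y => c * y + b u) (s := fun _ => Set.univ) (t₀ := u₀)
    (fun u => ((lipschitzWith_smul c).add (LipschitzWith.const (b u))).lipschitzOnWith)
    (fun u => ⟨hf u, trivial⟩) (fun u => ⟨hg u, trivial⟩) h₀

lemma eq_thresholdSol_of_hasDerivAt {d θ : ℕ} (hθd : θ ≤ d) {S : ℕ → ℝ → ℝ}
    (hS0 : ∀ u : ℝ, HasDerivAt (S 0) (-(d:ℝ) * S 0 u) u)
    (hSl : ∀ ℓ, 1 ≤ ℓ → ℓ < θ → ∀ u : ℝ, HasDerivAt (S ℓ)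
      (((d:ℝ) - ℓ + 1) * S (ℓ-1) u - ((d:ℝ) - ℓ) * S ℓ u) u) (u₀ : ℝ) :
    ∀ ℓ < θ, S ℓ = fun u => thresholdSol d (fun r => S r u₀) ℓ (exp (u₀ - u)) := by
  have hx (u : ℝ) : HasDerivAt (fun w => exp (u₀ - w)) (-exp (u₀ - u)) u := by
    simpa using ((hasDerivAt_id u).const_sub u₀).exp
  have hinit (ℓ : ℕ) : S ℓ u₀ = thresholdSol d (fun r => S r u₀) ℓ (exp (u₀ - u₀)) := by
    rw [sub_self, exp_zero, thresholdSol_one]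
  intro ℓ hℓ
  induction ℓ with
  | zero =>
    refine eq_of_hasDerivAt_linear (c := -(d : ℝ)) (b := 0)
      (fun u => by simpa only [Pi.zero_apply, add_zero] using hS0 u)
      (fun u => by
        simpa only [Pi.zero_apply, add_zero] using hasDerivAt_thresholdSol_zero d _ (hx u))
      (hinit 0)
  | succ m ih =>
    have hSm := ih (by omega)
    refine eq_of_hasDerivAt_linear (c := -((d : ℝ) - (m + 1)))
      (b := fun u => ((d : ℝ) - m) * S m u) (fun u => ?_) (fun u => ?_) (hinit (m + 1))
    · refine (hSl (m + 1) (by omega) hℓ u).congr_deriv ?_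
      push_cast
      ring
    · refine (hasDerivAt_thresholdSol_succ d _ (hx u) (by omega)).congr_deriv ?_
      rw [hSm]
      ring

theorem stmt_7_general (lam : ℝ) (hlam : 0 < lam) (d θ : ℕ) (hθd : θ ≤ d)
    (S : ℕ → ℝ → ℝ)
    (hS0 : ∀ u : ℝ, HasDerivAt (S 0) (-(d:ℝ) * S 0 u) u)
    (hSl : ∀ ℓ, 1 ≤ ℓ → ℓ < θ → ∀ u : ℝ, HasDerivAt (S ℓ)
      (((d:ℝ) - ℓ + 1) * S (ℓ-1) u - ((d:ℝ) - ℓ) * S ℓ u) u) :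
    ∀ τ ∈ Set.Ico (0:ℝ) (lam/2), ∀ ℓ < θ,
      S ℓ (-(1/2) * Real.log (lam - 2*τ)) =
        Real.sqrt (1 - 2*τ/lam) ^ (d - ℓ) *
        ∑ r ∈ Finset.range (ℓ+1),
          S r (-(1/2) * Real.log lam) * ((d - r).choose (ℓ - r) : ℝ) *
            (1 - Real.sqrt (1 - 2*τ/lam)) ^ (ℓ - r) := by
  rintro τ ⟨-, hτ⟩ ℓ hℓ
  have hx : exp (-(1/2) * log lam - -(1/2) * log (lam - 2*τ)) = √(1 - 2*τ/lam) := by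
    have hlog : -(1/2) * log lam - -(1/2) * log (lam - 2*τ) = log ((lam - 2*τ) / lam) / 2 := by
      rw [log_div (by linarith) hlam.ne']
      ring
    rw [hlog, exp_half, exp_log (div_pos (by linarith) hlam), sub_div, div_self hlam.ne']
  rw [congrFun (eq_thresholdSol_of_hasDerivAt hθd hS0 hSl (-(1/2) * log lam) ℓ hℓ), hx]
  rfl

theorem stmt_7 (lam : ℝ) (hlam : 0 < lam) (d θ : ℕ) (hd : 1 ≤ d) (hθ : 1 ≤ θ) (hθd : θ ≤ d)
    (S : ℕ → ℝ → ℝ)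
    (hS0 : ∀ u : ℝ, HasDerivAt (S 0) (-(d:ℝ) * S 0 u) u)
    (hSl : ∀ ℓ, 1 ≤ ℓ → ℓ < θ → ∀ u : ℝ, HasDerivAt (S ℓ)
      (((d:ℝ) - ℓ + 1) * S (ℓ-1) u - ((d:ℝ) - ℓ) * S ℓ u) u) :
    ∀ τ ∈ Set.Ico (0:ℝ) (lam/2), ∀ ℓ < θ,
      S ℓ (-(1/2) * Real.log (lam - 2*τ)) =
        Real.sqrt (1 - 2*τ/lam) ^ (d - ℓ) *
        ∑ r ∈ Finset.range (ℓ+1),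
          S r (-(1/2) * Real.log lam) * ((d - r).choose (ℓ - r) : ℝ) *
            (1 - Real.sqrt (1 - 2*τ/lam)) ^ (ℓ - r) :=
  stmt_7_general lam hlam d θ hθd S hS0 hSl
end

section
/- In the two-strategy equilibrium map for regular graphs, the function f^γ(x) = α_R + α_S·[γ + (1-γ)(x+(1-x)e^{-β})^{d-1}] with α_R + α_S ≤ 1, α_S > 0, β > 0, d ≥ 2, γ ∈ [0,1], has a unique fixed point x*(γ) in [0,1] when α_R + α_S < 1; moreover γ ↦ x*(γ) is nondecreasing (strictly increasing when x*(γ) < 1). -/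
theorem stmt_19 (alphaR alphaS β : ℝ) (d : ℕ)
    (hαR : 0 ≤ alphaR) (hαS : 0 < alphaS) (hsum : alphaR + alphaS < 1)
    (hβ : 0 < β) (hd : 2 ≤ d)
    (f : ℝ → ℝ → ℝ)
    (hf : ∀ γ x, f γ x = alphaR +
      alphaS * (γ + (1 - γ) * (x + (1-x) * Real.exp (-β)) ^ (d-1))) :
    (∀ γ ∈ Set.Icc (0:ℝ) 1, ∃! x, x ∈ Set.Icc (0:ℝ) 1 ∧ f γ x = x) ∧
    (∀ γ₁ ∈ Set.Icc (0:ℝ) 1, ∀ γ₂ ∈ Set.Icc (0:ℝ) 1,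
      ∀ x₁ ∈ Set.Icc (0:ℝ) 1, ∀ x₂ ∈ Set.Icc (0:ℝ) 1,
      f γ₁ x₁ = x₁ → f γ₂ x₂ = x₂ → γ₁ ≤ γ₂ →
        x₁ ≤ x₂ ∧ (γ₁ < γ₂ → x₁ < 1 → x₁ < x₂)) := by
  set e : ℝ := Real.exp (-β) with hedef
  have he1 : e < 1 := by
    rw [hedef, Real.exp_lt_one_iff]; linarith
  have he0 : 0 < e := Real.exp_pos _
  set n : ℕ := d - 1 with hndef
  have hn1 : 1 ≤ n := by omega
  have hf' : ∀ γ x, f γ x = (alphaR + alphaS * γ) +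
      (alphaS * (1 - γ)) * (e + (1 - e) * x) ^ n := by
    intro γ x
    rw [hf]
    have : x + (1 - x) * e = e + (1 - e) * x := by ring
    rw [this]; ring
  -- convexity of the base power function
  have hp : ConvexOn ℝ (Set.Icc (0:ℝ) 1) (fun x => (e + (1 - e) * x) ^ n) := by
    refine ⟨convex_Icc _ _, ?_⟩
    intro x hx y hy a b ha hb hab
    have h1 : (0:ℝ) ≤ e + (1 - e) * x := by nlinarith [hx.1]
    have h2 : (0:ℝ) ≤ e + (1 - e) * y := by nlinarith [hy.1]
    have key := (convexOn_pow (𝕜 := ℝ) n).2 (Set.mem_Ici.2 h1) (Set.mem_Ici.2 h2) ha hb hab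
    simp only [smul_eq_mul] at key ⊢
    have harg : e + (1 - e) * (a * x + b * y) = a * (e + (1 - e) * x) + b * (e + (1 - e) * y) := by
      nlinarith [hab]
    rw [harg]
    exact key
  -- convexity of f γ
  have hconv : ∀ γ ∈ Set.Icc (0:ℝ) 1, ConvexOn ℝ (Set.Icc (0:ℝ) 1) (f γ) := by
    intro γ hγ
    refine ⟨convex_Icc _ _, ?_⟩
    intro x hx y hy a b ha hb hab
    simp only [smul_eq_mul, hf']
    have key := hp.2 hx hy ha hb hab
    simp only [smul_eq_mul] at key
    have hc : 0 ≤ alphaS * (1 - γ) := by nlinarith [hγ.2]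
    nlinarith [mul_le_mul_of_nonneg_left key hc]
  -- value at 1
  have hf1 : ∀ γ : ℝ, f γ 1 = alphaR + alphaS := by
    intro γ
    rw [hf' γ 1]
    have : e + (1 - e) * 1 = 1 := by ring
    rw [this, one_pow]; ring
  -- base at points in [0,1]
  have hbase_le_one : ∀ x ∈ Set.Icc (0:ℝ) 1, (e + (1 - e) * x) ^ n ≤ 1 := by
    intro x hx
    apply pow_le_one₀
    · nlinarith [hx.1]
    · nlinarith [hx.2]
  -- key claim: if y ≤ f γ y and z is a fixed point then y ≤ z
  have claim : ∀ γ ∈ Set.Icc (0:ℝ) 1, ∀ y ∈ Set.Icc (0:ℝ) 1, ∀ z ∈ Set.Icc (0:ℝ) 1,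
      y ≤ f γ y → f γ z = z → y ≤ z := by
    intro γ hγ y hy z hz hyf hzf
    by_contra hcon
    push_neg at hcon  -- z < y
    have hy1 : y < 1 := by
      rcases lt_or_eq_of_le hy.2 with h | h
      · exact h
      · exfalso; rw [h] at hyf; rw [hf1] at hyf; linarith
    have hslope := (hconv γ hγ).slope_mono_adjacent hz (Set.mem_Icc.2 ⟨zero_le_one, le_refl 1⟩)
      hcon hy1
    rw [hzf, hf1] at hslope
    -- slope on [z,y] ≥ 1
    have hl : (1:ℝ) ≤ (f γ y - z) / (y - z) := by
      rw [le_div_iff₀ (by linarith)]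
      linarith
    -- slope on [y,1] < 1
    have hr : (alphaR + alphaS - f γ y) / (1 - y) < 1 := by
      rw [div_lt_one (by linarith)]
      linarith
    linarith
  have huniq : ∀ γ ∈ Set.Icc (0:ℝ) 1, ∃! x, x ∈ Set.Icc (0:ℝ) 1 ∧ f γ x = x := by
    intro γ hγ
    -- existence via IVT
    have hcont : ContinuousOn (fun x => f γ x - x) (Set.Icc (0:ℝ) 1) := by
      have : (fun x : ℝ => f γ x - x) = fun x =>
          (alphaR + alphaS * γ) + (alphaS * (1 - γ)) * (e + (1 - e) * x) ^ n - x := by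
        funext x; rw [hf']
      rw [this]
      fun_prop
    have hIVT := intermediate_value_Icc' (zero_le_one (α := ℝ)) hcont
    have hv1 : f γ 1 - 1 < 0 := by rw [hf1]; linarith
    have hv0 : 0 ≤ f γ 0 - 0 := by
      rw [hf' γ 0]
      have hpn : (0:ℝ) ≤ (e + (1 - e) * 0) ^ n := by
        apply pow_nonneg; nlinarith
      have hc : 0 ≤ alphaS * (1 - γ) := by nlinarith [hγ.2]
      nlinarith [hγ.1, mul_nonneg hc hpn, mul_nonneg hαS.le hγ.1]
    have hmem : (0:ℝ) ∈ Set.Icc (f γ 1 - 1) (f γ 0 - 0) := ⟨hv1.le, hv0⟩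
    obtain ⟨x, hx, hxeq⟩ := hIVT hmem
    have hxfix : f γ x = x := by
      have : f γ x - x = 0 := hxeq
      linarith
    refine ⟨x, ⟨hx, hxfix⟩, ?_⟩
    intro y ⟨hy, hyfix⟩
    have h1 := claim γ hγ y hy x hx (le_of_eq hyfix.symm) hxfix
    have h2 := claim γ hγ x hx y hy (le_of_eq hxfix.symm) hyfix
    linarith
  refine ⟨huniq, ?_⟩
  intro γ₁ hγ₁ γ₂ hγ₂ x₁ hx₁ x₂ hx₂ hfix₁ hfix₂ hle
  -- f γ₂ x₁ ≥ x₁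
  have hmono : x₁ ≤ f γ₂ x₁ := by
    have hb := hbase_le_one x₁ hx₁
    have : f γ₂ x₁ - f γ₁ x₁ = alphaS * (γ₂ - γ₁) * (1 - (e + (1 - e) * x₁) ^ n) := by
      rw [hf', hf']; ring
    nlinarith [mul_nonneg (mul_nonneg hαS.le (by linarith : (0:ℝ) ≤ γ₂ - γ₁)) (by linarith : (0:ℝ) ≤ 1 - (e + (1 - e) * x₁) ^ n)]
  have hle12 : x₁ ≤ x₂ := claim γ₂ hγ₂ x₁ hx₁ x₂ hx₂ hmono hfix₂
  refine ⟨hle12, ?_⟩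
  intro hlt hx1lt1
  rcases lt_or_eq_of_le hle12 with h | h
  · exact h
  · exfalso
    -- x₁ = x₂, both fixed for γ₁ and γ₂
    rw [← h] at hfix₂
    have hdiff : alphaS * (γ₂ - γ₁) * (1 - (e + (1 - e) * x₁) ^ n) = 0 := by
      have e1 := hf' γ₁ x₁
      have e2 := hf' γ₂ x₁
      rw [hfix₁] at e1
      rw [hfix₂] at e2
      linear_combination e1 - e2
    have hblt : (e + (1 - e) * x₁) ^ n < 1 := by
      apply pow_lt_one₀
      · nlinarith [hx₁.1]
      · nlinarith
      · omega
    have : 0 < alphaS * (γ₂ - γ₁) * (1 - (e + (1 - e) * x₁) ^ n) := by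
      apply mul_pos (mul_pos hαS (by linarith)) (by linarith)
    linarith
end
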